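/- If a T-tree C is canonical and C' is isomorphic to C, then C ⋞ C'. -/

import Mathlib

/-- A T-tree: a node labeled by a type (ℕ), with children grouped into
    T-lists (one list per component type, in type order). -/
inductive TTree : Type where
  | node : ℕ → List (List TTree) → TTree

namespace TTree

/-- The root type (label) of a T-tree. -/
def label : TTree → ℕ
  | .node a _ => a

/-- The list of T-lists of a T-tree. -/
def tlists : TTree → List (List TTree)
  | .node _ ls => ls

/-- A T-tree is a leaf iff all its T-lists are empty. -/
def isLeaf : TTree → Bool
  | .node _ ls => ls.all List.isEmpty

mutual
  /-- Comparison of T-trees: root types first, then the sequences of T-lists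
      lexicographically by the T-list order ≪. -/
  def cmpT : TTree → TTree → Ordering
    | .node a ls, .node b ls' => (compare a b).then (cmpOuter ls ls')
  /-- Lexicographic comparison of sequences of T-lists by ≪
      (≪ compares T-lists by length first, then lexicographically by ⋞). -/
  def cmpOuter : List (List TTree) → List (List TTree) → Ordering
    | [], [] => .eq
    | [], _ :: _ => .lt
    | _ :: _, [] => .gt
    | l :: ls, l' :: ls' =>
        (((compare l.length l'.length).then (cmpInner l l')).then (cmpOuter ls ls'))
  /-- Lexicographic comparison of equal-length T-lists by ⋞. -/
  def cmpInner : List TTree → List TTree → Ordering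
    | [], [] => .eq
    | [], _ :: _ => .lt
    | _ :: _, [] => .gt
    | a :: as, b :: bs => (cmpT a b).then (cmpInner as bs)
end

/-- The order ⋞ on T-trees. -/
def le (C C' : TTree) : Prop := cmpT C C' ≠ .gt

/-- The order ≪ on T-lists: length first, then lexicographically by ⋞. -/
def lle (L L' : List TTree) : Prop :=
  ((compare L.length L'.length).then (cmpInner L L')) ≠ .gt

/-- Canonicity of a T-tree: every T-list sorted non-decreasingly by ⋞,
    every subtree canonical. -/
inductive Canonical : TTree → Prop where
  | mk (a : ℕ) (ls : List (List TTree))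
      (hsorted : ∀ L ∈ ls, L.Chain' le)
      (hrec : ∀ L ∈ ls, ∀ c ∈ L, Canonical c) :
      Canonical (.node a ls)

end TTree

namespace TTree

mutual
  /-- Isomorphism of T-trees: same root type, and the T-lists are pairwise
      related by permutation up to isomorphism, recursively. -/
  inductive Iso : TTree → TTree → Prop where
    | mk (a : ℕ) (ls ls' : List (List TTree)) :
        IsoOuter ls ls' → Iso (.node a ls) (.node a ls')
  /-- Pointwise relation between the sequences of T-lists. -/
  inductive IsoOuter : List (List TTree) → List (List TTree) → Prop where
    | nil : IsoOuter [] []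
    | cons {L L' : List TTree} {ls ls' : List (List TTree)} :
        IsoList L L' → IsoOuter ls ls' → IsoOuter (L :: ls) (L' :: ls')
  /-- Permutation of a T-list up to isomorphism of its members. -/
  inductive IsoList : List TTree → List TTree → Prop where
    | nil : IsoList [] []
    | cons {a b : TTree} {l₁ l₂ : List TTree} :
        Iso a b → IsoList l₁ l₂ → IsoList (a :: l₁) (b :: l₂)
    | swap (a b : TTree) (l : List TTree) : IsoList (a :: b :: l) (b :: a :: l)
    | trans {l₁ l₂ l₃ : List TTree} :
        IsoList l₁ l₂ → IsoList l₂ l₃ → IsoList l₁ l₃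
end

end TTree

namespace TTree

theorem nat_compare_swap (a b : ℕ) : compare a b = (compare b a).swap := by
  rcases lt_trichotomy a b with h|h|h
  · rw [compare_lt_iff_lt.2 h, compare_gt_iff_gt.2 h]; rfl
  · subst h; rw [compare_eq_iff_eq.2 rfl]; rfl
  · rw [compare_gt_iff_gt.2 h, compare_lt_iff_lt.2 h]; rfl

theorem then_swap (o₁ o₂ : Ordering) : (o₁.then o₂).swap = o₁.swap.then o₂.swap := by
  cases o₁ <;> rfl

theorem then_eq_eq {o₁ o₂ : Ordering} (h : o₁.then o₂ = .eq) : o₁ = .eq ∧ o₂ = .eq := by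
  cases o₁ <;> simp_all [Ordering.then]

theorem then_eq_lt {o₁ o₂ : Ordering} : o₁.then o₂ = .lt ↔ o₁ = .lt ∨ (o₁ = .eq ∧ o₂ = .lt) := by
  cases o₁ <;> simp [Ordering.then]

theorem then_ne_gt {o₁ o₂ : Ordering} (h1 : o₁ ≠ .gt) (h2 : o₁ = .eq → o₂ ≠ .gt) :
    o₁.then o₂ ≠ .gt := by
  cases o₁ <;> simp_all [Ordering.then]

mutual
theorem cmpT_swap : ∀ x y : TTree, cmpT x y = (cmpT y x).swap
  | .node a ls, .node b ls' => by
    rw [cmpT, cmpT, then_swap, ← nat_compare_swap, ← cmpOuter_swap]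
theorem cmpOuter_swap : ∀ ls ls' : List (List TTree), cmpOuter ls ls' = (cmpOuter ls' ls).swap
  | [], [] => rfl
  | [], _ :: _ => rfl
  | _ :: _, [] => rfl
  | l :: ls, l' :: ls' => by
    rw [cmpOuter, cmpOuter, then_swap, then_swap, ← nat_compare_swap,
      ← cmpInner_swap, ← cmpOuter_swap]
theorem cmpInner_swap : ∀ l l' : List TTree, cmpInner l l' = (cmpInner l' l).swap
  | [], [] => rfl
  | [], _ :: _ => rfl
  | _ :: _, [] => rfl
  | a :: as, b :: bs => by
    rw [cmpInner, cmpInner, then_swap, ← cmpT_swap, ← cmpInner_swap]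
end

mutual
theorem cmpT_eq : ∀ x y : TTree, cmpT x y = .eq → x = y
  | .node a ls, .node b ls' => by
    rw [cmpT]; intro h
    obtain ⟨h1, h2⟩ := then_eq_eq h
    rw [compare_eq_iff_eq.1 h1, cmpOuter_eq ls ls' h2]
theorem cmpOuter_eq : ∀ ls ls' : List (List TTree), cmpOuter ls ls' = .eq → ls = ls'
  | [], [] => fun _ => rfl
  | [], _ :: _ => by rw [cmpOuter]; intro h; exact absurd h (by simp)
  | _ :: _, [] => by rw [cmpOuter]; intro h; exact absurd h (by simp)
  | l :: ls, l' :: ls' => by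
    rw [cmpOuter]; intro h
    obtain ⟨h1, h2⟩ := then_eq_eq h
    obtain ⟨_, h3⟩ := then_eq_eq h1
    rw [cmpInner_eq l l' h3, cmpOuter_eq ls ls' h2]
theorem cmpInner_eq : ∀ l l' : List TTree, cmpInner l l' = .eq → l = l'
  | [], [] => fun _ => rfl
  | [], _ :: _ => by rw [cmpInner]; intro h; exact absurd h (by simp)
  | _ :: _, [] => by rw [cmpInner]; intro h; exact absurd h (by simp)
  | a :: as, b :: bs => by
    rw [cmpInner]; intro h
    obtain ⟨h1, h2⟩ := then_eq_eq h
    rw [cmpT_eq a b h1, cmpInner_eq as bs h2]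
end

theorem cmpT_refl (x : TTree) : cmpT x x = .eq := by
  have h := cmpT_swap x x
  cases hx : cmpT x x <;> rw [hx] at h <;> first | rfl | exact absurd h (by simp [Ordering.swap])

mutual
theorem cmpT_lt_trans : ∀ x y z : TTree, cmpT x y = .lt → cmpT y z = .lt → cmpT x z = .lt
  | .node a ls, .node b ls', .node c ls'' => by
    rw [cmpT, cmpT, cmpT]; intro h1 h2
    rcases then_eq_lt.1 h1 with h1 | ⟨h1e, h1o⟩ <;>
      rcases then_eq_lt.1 h2 with h2 | ⟨h2e, h2o⟩
    · exact then_eq_lt.2 (Or.inl (compare_lt_iff_lt.2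
        (lt_trans (compare_lt_iff_lt.1 h1) (compare_lt_iff_lt.1 h2))))
    · rw [compare_eq_iff_eq.1 h2e] at h1; exact then_eq_lt.2 (Or.inl h1)
    · rw [← compare_eq_iff_eq.1 h1e] at h2; exact then_eq_lt.2 (Or.inl h2)
    · obtain rfl := compare_eq_iff_eq.1 h1e
      obtain rfl := compare_eq_iff_eq.1 h2e
      exact then_eq_lt.2 (Or.inr ⟨compare_eq_iff_eq.2 rfl, cmpOuter_lt_trans ls ls' ls'' h1o h2o⟩)
theorem cmpOuter_lt_trans :
    ∀ x y z : List (List TTree), cmpOuter x y = .lt → cmpOuter y z = .lt → cmpOuter x z = .lt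
  | [], [], _ => by rw [cmpOuter]; intro h; exact absurd h (by simp)
  | _ :: _, [], _ => by rw [cmpOuter]; intro h; exact absurd h (by simp)
  | _, _ :: _, [] => by intro _ h; rw [cmpOuter] at h; exact absurd h (by simp)
  | [], _ :: _, _ :: _ => fun _ _ => rfl
  | l :: ls, l' :: ls', l'' :: ls'' => by
    rw [cmpOuter, cmpOuter, cmpOuter]; intro h1 h2
    rcases then_eq_lt.1 h1 with h1 | ⟨h1e, h1o⟩ <;>
      rcases then_eq_lt.1 h2 with h2 | ⟨h2e, h2o⟩
    · rcases then_eq_lt.1 h1 with h1 | ⟨h1e, h1i⟩ <;>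
        rcases then_eq_lt.1 h2 with h2 | ⟨h2e, h2i⟩
      · exact then_eq_lt.2 (Or.inl (then_eq_lt.2 (Or.inl (compare_lt_iff_lt.2
          (lt_trans (compare_lt_iff_lt.1 h1) (compare_lt_iff_lt.1 h2))))))
      · rw [compare_eq_iff_eq.1 h2e] at h1; exact then_eq_lt.2 (Or.inl (then_eq_lt.2 (Or.inl h1)))
      · rw [← compare_eq_iff_eq.1 h1e] at h2; exact then_eq_lt.2 (Or.inl (then_eq_lt.2 (Or.inl h2)))
      · rw [compare_eq_iff_eq.1 h1e, ← compare_eq_iff_eq.1 h2e] at *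
        exact then_eq_lt.2 (Or.inl (then_eq_lt.2 (Or.inr ⟨compare_eq_iff_eq.2 rfl,
          cmpInner_lt_trans l l' l'' h1i h2i⟩)))
    · obtain ⟨h2a, h2b⟩ := then_eq_eq h2e
      rw [cmpInner_eq l' l'' h2b] at h1
      exact then_eq_lt.2 (Or.inl h1)
    · obtain ⟨h1a, h1b⟩ := then_eq_eq h1e
      rw [← cmpInner_eq l l' h1b] at h2
      exact then_eq_lt.2 (Or.inl h2)
    · obtain ⟨h1a, h1b⟩ := then_eq_eq h1e
      obtain rfl := cmpInner_eq l l' h1b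
      exact then_eq_lt.2 (Or.inr ⟨h2e, cmpOuter_lt_trans ls ls' ls'' h1o h2o⟩)
theorem cmpInner_lt_trans :
    ∀ x y z : List TTree, cmpInner x y = .lt → cmpInner y z = .lt → cmpInner x z = .lt
  | [], [], _ => by rw [cmpInner]; intro h; exact absurd h (by simp)
  | _ :: _, [], _ => by rw [cmpInner]; intro h; exact absurd h (by simp)
  | _, _ :: _, [] => by intro _ h; rw [cmpInner] at h; exact absurd h (by simp)
  | [], _ :: _, _ :: _ => fun _ _ => rfl
  | a :: as, b :: bs, c :: cs => by
    rw [cmpInner, cmpInner, cmpInner]; intro h1 h2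
    rcases then_eq_lt.1 h1 with h1 | ⟨h1e, h1i⟩ <;>
      rcases then_eq_lt.1 h2 with h2 | ⟨h2e, h2i⟩
    · exact then_eq_lt.2 (Or.inl (cmpT_lt_trans a b c h1 h2))
    · rw [cmpT_eq b c h2e] at h1; exact then_eq_lt.2 (Or.inl h1)
    · rw [← cmpT_eq a b h1e] at h2; exact then_eq_lt.2 (Or.inl h2)
    · obtain rfl := cmpT_eq a b h1e
      exact then_eq_lt.2 (Or.inr ⟨h2e, cmpInner_lt_trans as bs cs h1i h2i⟩)
end

theorem le_iff {x y : TTree} : le x y ↔ cmpT x y = .lt ∨ x = y := by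
  unfold le
  constructor
  · intro h
    cases hx : cmpT x y
    · exact Or.inl rfl
    · exact Or.inr (cmpT_eq x y hx)
    · exact absurd hx h
  · rintro (h | rfl)
    · simp [h]
    · simp [cmpT_refl]

theorem le_trans' {x y z : TTree} (h1 : le x y) (h2 : le y z) : le x z := by
  rcases le_iff.1 h1 with h1 | rfl
  · rcases le_iff.1 h2 with h2 | rfl
    · exact le_iff.2 (Or.inl (cmpT_lt_trans x y z h1 h2))
    · exact le_iff.2 (Or.inl h1)
  · exact h2

theorem le_antisymm' {x y : TTree} (h1 : le x y) (h2 : le y x) : x = y := by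
  rcases le_iff.1 h1 with h1 | rfl
  · rcases le_iff.1 h2 with h2 | rfl
    · rw [cmpT_swap] at h1
      cases hx : cmpT y x <;> rw [hx] at h1 <;> simp_all [Ordering.swap]
    · rfl
  · rfl

/-- head of a chain is ≤ every element of the tail -/
theorem chain'_head_le {a : TTree} : ∀ {as : List TTree}, List.Chain' le (a :: as) →
    ∀ x ∈ as, le a x := by
  intro as
  induction as generalizing a with
  | nil => intro _ x hx; cases hx
  | cons b bs ih =>
    intro h x hx
    have hab : le a b := (List.isChain_cons_cons.1 h).1
    rcases List.mem_cons.1 hx with rfl | hx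
    · exact hab
    · exact le_trans' hab (ih (List.isChain_cons_cons.1 h).2 x hx)

mutual
theorem iso_refl : ∀ x : TTree, Iso x x
  | .node a ls => Iso.mk a ls ls (isoOuter_refl ls)
theorem isoOuter_refl : ∀ ls : List (List TTree), IsoOuter ls ls
  | [] => IsoOuter.nil
  | l :: ls => IsoOuter.cons (isoList_refl l) (isoOuter_refl ls)
theorem isoList_refl : ∀ l : List TTree, IsoList l l
  | [] => IsoList.nil
  | a :: as => IsoList.cons (iso_refl a) (isoList_refl as)
end

theorem isoOuter_trans : ∀ {l₁ l₂ l₃ : List (List TTree)},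
    IsoOuter l₁ l₂ → IsoOuter l₂ l₃ → IsoOuter l₁ l₃ := by
  intro l₁
  induction l₁ with
  | nil =>
    intro l₂ l₃ h1 h2
    cases h1; cases h2; exact IsoOuter.nil
  | cons L ls ih =>
    intro l₂ l₃ h1 h2
    cases h1 with
    | cons hL hls =>
      cases h2 with
      | cons hL' hls' => exact IsoOuter.cons (IsoList.trans hL hL') (ih hls hls')

theorem iso_trans {x y z : TTree} (h1 : Iso x y) (h2 : Iso y z) : Iso x z := by
  cases h1 with
  | mk a ls ls' h1' =>
    cases h2 with
    | mk _ _ ls'' h2' => exact Iso.mk a ls ls'' (isoOuter_trans h1' h2')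

theorem isoList_length {l l' : List TTree} (h : IsoList l l') : l.length = l'.length := by
  refine IsoList.rec (motive_1 := fun _ _ _ => True) (motive_2 := fun _ _ _ => True)
    (motive_3 := fun l l' _ => l.length = l'.length) ?_ ?_ ?_ ?_ ?_ ?_ ?_ h <;>
    intros <;> simp_all

theorem forall2_iso_trans : ∀ {l m n : List TTree},
    List.Forall₂ Iso l m → List.Forall₂ Iso m n → List.Forall₂ Iso l n := by
  intro l m n h1 h2
  induction h1 generalizing n with
  | nil => cases h2; exact List.Forall₂.nil
  | cons h hs ih =>
    cases h2 with
    | cons h' hs' => exact List.Forall₂.cons (iso_trans h h') (ih hs')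

/-- permutation commutes with Forall₂ -/
theorem perm_forall2 {α : Type} {r : α → α → Prop} :
    ∀ {m₁ l₂ : List α}, m₁.Perm l₂ → ∀ {m₂ : List α}, List.Forall₂ r l₂ m₂ →
      ∃ n, List.Forall₂ r m₁ n ∧ n.Perm m₂ := by
  intro m₁ l₂ hp
  induction hp with
  | nil => intro m₂ h; cases h; exact ⟨[], List.Forall₂.nil, List.Perm.nil⟩
  | cons x p ih =>
    intro m₂ h
    cases h with
    | cons hx hs =>
      obtain ⟨n, hn, hnp⟩ := ih hs
      exact ⟨_ :: n, List.Forall₂.cons hx hn, hnp.cons _⟩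
  | swap x y t =>
    intro m₂ h
    cases h with
    | cons hx hs =>
      cases hs with
      | cons hy ht =>
        exact ⟨_ :: _ :: _, List.Forall₂.cons hy (List.Forall₂.cons hx ht),
          List.Perm.swap _ _ _⟩
  | trans p1 p2 ih1 ih2 =>
    intro m₂ h
    obtain ⟨n₂, hn₂, hp₂⟩ := ih2 h
    obtain ⟨n₁, hn₁, hp₁⟩ := ih1 hn₂
    exact ⟨n₁, hn₁, hp₁.trans hp₂⟩

theorem isoList_decomp {l l' : List TTree} (h : IsoList l l') :
    ∃ m, List.Forall₂ Iso l m ∧ m.Perm l' := by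
  refine IsoList.rec (motive_1 := fun _ _ _ => True) (motive_2 := fun _ _ _ => True)
    (motive_3 := fun l l' _ => ∃ m, List.Forall₂ Iso l m ∧ m.Perm l')
    ?_ ?_ ?_ ?_ ?_ ?_ ?_ h
  · intros; trivial
  · trivial
  · intros; trivial
  · exact ⟨[], List.Forall₂.nil, List.Perm.nil⟩
  · intro a b l₁ l₂ hab _ _ ih
    obtain ⟨m, hm, hp⟩ := ih
    exact ⟨_ :: m, List.Forall₂.cons hab hm, hp.cons _⟩
  · intro a b t
    exact ⟨a :: b :: t, List.forall₂_same.mpr (fun x _ => iso_refl x), List.Perm.swap _ _ _⟩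
  · intro l₁ l₂ l₃ _ _ ih1 ih2
    obtain ⟨m₁, hm₁, hp₁⟩ := ih1
    obtain ⟨m₂, hm₂, hp₂⟩ := ih2
    obtain ⟨n, hn, hnp⟩ := perm_forall2 hp₁ hm₂
    exact ⟨n, forall2_iso_trans hm₁ hn, hnp.trans hp₂⟩

theorem forall2_split {r : TTree → TTree → Prop} :
    ∀ {m₁ : List TTree} {b : TTree} {m₂ l : List TTree},
      List.Forall₂ r l (m₁ ++ b :: m₂) →
      ∃ l₁ x l₂, l = l₁ ++ x :: l₂ ∧ List.Forall₂ r l₁ m₁ ∧ r x b ∧ List.Forall₂ r l₂ m₂ := by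
  intro m₁
  induction m₁ with
  | nil =>
    intro b m₂ l h
    cases h with
    | cons hx hs => exact ⟨[], _, _, rfl, List.Forall₂.nil, hx, hs⟩
  | cons m ms ih =>
    intro b m₂ l h
    cases h with
    | cons hx hs =>
      obtain ⟨l₁, x, l₂, rfl, h1, h2, h3⟩ := ih hs
      exact ⟨_ :: l₁, x, l₂, rfl, List.Forall₂.cons hx h1, h2, h3⟩

theorem key : ∀ n : ℕ, ∀ L M L' : List TTree, L.length ≤ n → List.Chain' le L →
    (∀ x ∈ L, ∀ y, Iso x y → cmpT x y ≠ .gt) →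
    List.Forall₂ Iso L M → M.Perm L' → cmpInner L L' ≠ .gt := by
  intro n
  induction n with
  | zero =>
    intro L M L' hlen _ _ hf hp
    have hL : L = [] := List.eq_nil_of_length_eq_zero (Nat.le_zero.1 hlen)
    subst hL
    cases hf
    have : L' = [] := hp.nil_eq.symm
    subst this
    rw [cmpInner]; simp
  | succ n ih =>
    intro L M L' hlen hchain hmem hf hp
    cases L with
    | nil =>
      cases hf
      have : L' = [] := hp.nil_eq.symm
      subst this
      rw [cmpInner]; simp
    | cons a as =>
      have hML : M.length = (a :: as).length := (hf.length_eq).symm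
      have hL'M : L'.length = M.length := hp.length_eq.symm
      cases L' with
      | nil => exact absurd (hL'M.trans hML) (by simp)
      | cons b bs =>
        have hbM : b ∈ M := hp.symm.subset List.mem_cons_self
        obtain ⟨M₁, M₂, rfl⟩ := List.append_of_mem hbM
        have hbs : (M₁ ++ M₂).Perm bs := (List.perm_middle.symm.trans hp).cons_inv
        obtain ⟨L₁, x, L₂, hsplit, hf1, hxb, hf2⟩ := forall2_split hf
        have hxble : cmpT x b ≠ .gt := hmem x (hsplit ▸ (by simp)) b hxb
        cases L₁ with
        | nil =>
          simp only [List.nil_append] at hsplit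
          injection hsplit with h1 h2
          subst h1; subst h2
          have hM1 : M₁ = [] := by cases hf1; rfl
          subst hM1
          rw [cmpInner]
          refine then_ne_gt hxble fun heq => ?_
          obtain rfl := cmpT_eq _ _ heq
          exact ih as M₂ bs (by simpa using hlen) hchain.tail
            (fun y hy => hmem y (List.mem_cons_of_mem _ hy)) hf2 (by simpa using hbs)
        | cons c L₁' =>
          rw [List.cons_append] at hsplit
          injection hsplit with h1 hsplit'
          subst h1
          cases hf1 with
          | @cons _ m _ M₁' ham hf1' =>
            have hax : le a x := chain'_head_le hchain x (hsplit' ▸ (by simp))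
            have hab : le a b := le_trans' hax hxble
            rw [cmpInner]
            refine then_ne_gt hab fun heq => ?_
            obtain rfl := cmpT_eq _ _ heq
            obtain rfl : x = a := le_antisymm' hxble hax
            have hfas : List.Forall₂ Iso as (M₁' ++ m :: M₂) := by
              rw [hsplit']
              exact List.rel_append hf1' (List.Forall₂.cons ham hf2)
            have hperm : (M₁' ++ m :: M₂).Perm bs := by
              refine List.perm_middle.trans ?_
              simpa using hbs
            exact ih as (M₁' ++ m :: M₂) bs (by simpa using hlen) hchain.tail
              (fun y hy => hmem y (List.mem_cons_of_mem _ hy)) hfas hperm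

theorem outer_aux : ∀ {ls ls' : List (List TTree)}, IsoOuter ls ls' →
    (∀ L ∈ ls, List.Chain' le L) →
    (∀ L ∈ ls, ∀ x ∈ L, ∀ y, Iso x y → cmpT x y ≠ .gt) →
    cmpOuter ls ls' ≠ .gt := by
  intro ls
  induction ls with
  | nil =>
    intro ls' h _ _
    cases h
    rw [cmpOuter]; simp
  | cons L ls ih =>
    intro ls' h hs hm
    cases h with
    | cons hL hls =>
      rename_i L' ls''
      rw [cmpOuter]
      have hlen : compare L.length L'.length = .eq :=
        compare_eq_iff_eq.2 (isoList_length hL)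
      refine then_ne_gt (then_ne_gt (by simp [hlen]) fun _ => ?_) fun _ => ?_
      · obtain ⟨m, hfm, hpm⟩ := isoList_decomp hL
        exact key L.length L m L' le_rfl (hs L (by simp))
          (fun x hx => hm L (by simp) x hx) hfm hpm
      · exact ih hls (fun K hK => hs K (by simp [hK]))
          (fun K hK => hm K (by simp [hK]))

theorem main_aux : ∀ n : ℕ, ∀ C : TTree, sizeOf C ≤ n → ∀ C', Canonical C → Iso C C' →
    cmpT C C' ≠ .gt := by
  intro n
  induction n with
  | zero =>
    intro C hC
    cases C with
    | node a ls => simp [TTree.node.sizeOf_spec] at hC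
  | succ n ih =>
    intro C hC C' hcan hiso
    cases hiso with
    | mk a ls ls' houter =>
      cases hcan with
      | mk _ _ hsorted hrec =>
        rw [cmpT]
        refine then_ne_gt (by simp [compare_eq_iff_eq.2 (rfl : a = a)]) fun _ => ?_
        refine outer_aux houter hsorted ?_
        intro L hL x hx y hiso'
        have h1 : sizeOf x < sizeOf L := List.sizeOf_lt_of_mem hx
        have h2 : sizeOf L < sizeOf ls := List.sizeOf_lt_of_mem hL
        have h3 : sizeOf (TTree.node a ls) = 1 + sizeOf a + sizeOf ls := by
          simp [TTree.node.sizeOf_spec]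
        exact ih x (by omega) y (hrec L hL x hx) hiso'

end TTree

/-- If a T-tree `C` is canonical and `C'` is isomorphic to `C`, then `C ⋞ C'`. -/
theorem canonical_le_of_iso :
    ∀ C C' : TTree, TTree.Canonical C → TTree.Iso C C' → TTree.le C C' :=
  fun C C' h1 h2 => TTree.main_aux (sizeOf C) C le_rfl C' h1 h2
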